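/- For every finite, simple, connected, undirected graph G with cop number c(G) = 1, the value of the single-cop concurrent game is finite from every initial position: for every (x,y) ∈ V², v̂_{(x,y)} = inf_{π_C} sup_{π_R} v_{(x,y)}(π_C, π_R) < ∞. -/

import Mathlib

open Finset Filter

noncomputable section

variable {V : Type*} [Fintype V] [DecidableEq V]

/-- The closed neighborhood `N[u]` of a vertex `u`: `u` together with its neighbors. -/
def nbhd (G : SimpleGraph V) [DecidableRel G.Adj] (u : V) : Finset V :=
  insert u (G.neighborFinset u)

lemma nbhd_nonempty (G : SimpleGraph V) [DecidableRel G.Adj] (u : V) :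
    (nbhd G u).Nonempty :=
  ⟨u, Finset.mem_insert_self u _⟩

/-! ### The turn-based cops and robber game (TBCR) with `K` cops -/

/-- A position of the `K`-cop game: the cops' locations and the robber's location. -/
abbrev PosK (V : Type*) (K : ℕ) := (Fin K → V) × V

/-- A (deterministic, history-dependent) cop strategy for TBCR: an initial placement
of the `K` cops, and a move function from histories of completed rounds. -/
abbrev TBCop (V : Type*) (K : ℕ) := (Fin K → V) × (List (PosK V K) → Fin K → V)

/-- A (deterministic, history-dependent) robber strategy for TBCR: an initial placement
(seeing the cops' placement), and a move function from histories of completed rounds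
together with the cops' fresh move (the cop player moves first in each round). -/
abbrev TBRob (V : Type*) (K : ℕ) := ((Fin K → V) → V) × (List (PosK V K) → (Fin K → V) → V)

/-- The history of completed rounds of TBCR after round `t`; each token must move within its
closed neighborhood (attempted illegal moves leave the token in place). -/
def tbPlay (G : SimpleGraph V) [DecidableRel G.Adj] {K : ℕ}
    (sc : TBCop V K) (sr : TBRob V K) : ℕ → List (PosK V K)
  | 0 => [(sc.1, sr.1 sc.1)]
  | (t+1) =>
    let h := tbPlay G sc sr t
    let p := h.getLast?.getD (sc.1, sr.1 sc.1)
    let c' : Fin K → V := fun i => if sc.2 h i ∈ nbhd G (p.1 i) then sc.2 h i else p.1 i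
    let w := sr.2 h c'
    h ++ [(c', if w ∈ nbhd G p.2 then w else p.2)]

/-- The position of the TBCR game at the end of round `t`. -/
def tbPos (G : SimpleGraph V) [DecidableRel G.Adj] {K : ℕ}
    (sc : TBCop V K) (sr : TBRob V K) (t : ℕ) : PosK V K :=
  (tbPlay G sc sr t).getLast?.getD (sc.1, sr.1 sc.1)

/-- The robber is captured in TBCR: at some time a cop occupies the robber's current
vertex (either at the end of a round, or just after the cops' half of a round). -/
def tbCaptured (G : SimpleGraph V) [DecidableRel G.Adj] {K : ℕ}
    (sc : TBCop V K) (sr : TBRob V K) : Prop :=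
  ∃ t : ℕ, ∃ i : Fin K,
    (tbPos G sc sr t).1 i = (tbPos G sc sr t).2 ∨
    (tbPos G sc sr (t+1)).1 i = (tbPos G sc sr t).2

/-- `K` cops suffice in the turn-based game: the cop player has a strategy guaranteeing
capture against every robber strategy. -/
def tbCopWin (G : SimpleGraph V) [DecidableRel G.Adj] (K : ℕ) : Prop :=
  ∃ sc : TBCop V K, ∀ sr : TBRob V K, tbCaptured G sc sr

/-- The cop number `c(G)`: the minimum `K` for which the cop player wins TBCR. -/
def copNumber (G : SimpleGraph V) [DecidableRel G.Adj] : ℕ :=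
  sInf {K | tbCopWin G K}

/-! ### The single-cop concurrent game, with the expected-capture-time payoff -/

/-- A randomized strategy in the single-cop concurrent game: to each finite history of
positions (cop location, robber location) it assigns a distribution over next moves. -/
abbrev Strat (V : Type*) := List (V × V) → PMF V

/-- A strategy is memoryless if the distribution it assigns depends only on the
current (most recent) position. -/
def Memoryless (π : Strat V) : Prop :=
  ∀ h₁ h₂ : List (V × V), h₁.getLast? = h₂.getLast? → π h₁ = π h₂

/-- The single-cop CCCR transition function: simultaneous moves within closed
neighborhoods (illegal moves ignored), capture positions are absorbing, and a swap of
adjacent vertices is an \"en passant\" capture. -/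
def step1 (G : SimpleGraph V) [DecidableRel G.Adj] (p : V × V) (u w : V) : V × V :=
  if p.1 = p.2 then p
  else
    let u' := if u ∈ nbhd G p.1 then u else p.1
    let w' := if w ∈ nbhd G p.2 then w else p.2
    if u' = p.2 ∧ w' = p.1 then (u', u') else (u', w')

/-- The distribution over histories of the first `t+1` positions, induced by the
strategies `πC, πR` and the initial position `init`. -/
def play1 (G : SimpleGraph V) [DecidableRel G.Adj]
    (πC πR : Strat V) (init : V × V) : ℕ → PMF (List (V × V))
  | 0 => PMF.pure [init]
  | (t+1) => (play1 G πC πR init t).bind fun h =>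
      (πC h).bind fun u => (πR h).bind fun w =>
        PMF.pure (h ++ [step1 G (h.getLast?.getD init) u w])

/-- The probability that cop and robber occupy different vertices at time `t`
(capture is absorbing, so this is the probability that the robber is still free). -/
def freeProb1 (G : SimpleGraph V) [DecidableRel G.Adj]
    (πC πR : Strat V) (init : V × V) (t : ℕ) : ENNReal :=
  (play1 G πC πR init t).toOuterMeasure
    {h | (h.getLast?.getD init).1 ≠ (h.getLast?.getD init).2}

/-- The payoff: the expected number of rounds `t ≥ 0` at which cop and robber occupy
different vertices, i.e. the expected capture time. -/
def payoff (G : SimpleGraph V) [DecidableRel G.Adj]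
    (πC πR : Strat V) (init : V × V) : ENNReal :=
  ∑' t : ℕ, freeProb1 G πC πR init t

/-- The (upper) value of the game started at `init`; the cop minimizes and the robber
maximizes the expected capture time. -/
def gameValue (G : SimpleGraph V) [DecidableRel G.Adj] (init : V × V) : ENNReal :=
  ⨅ πC : Strat V, ⨆ πR : Strat V, payoff G πC πR init

/-!
A single cop who wins the turn-based game wins it from a fixed start, hence (by connectivity
and finiteness) from every position within some number `T` of rounds, even when the robber moves
first in each round and the cop answers. In the concurrent game the cop cannot see the robber's
move, so she guesses it uniformly in `N[y]` and plays the winning answer to her guess. A correct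
guess, of probability at least `1/|V|`, brings the position one level closer to capture, so the
robber survives each block of `T` rounds with probability at most `1 - |V|^(-T)` and the capture
time has a geometric tail.
-/

open scoped ENNReal

/-! ### Capture when the robber moves first -/

lemma mem_nbhd_self (G : SimpleGraph V) [DecidableRel G.Adj] (x : V) : x ∈ nbhd G x :=
  mem_insert_self _ _

lemma mem_nbhd_of_adj {G : SimpleGraph V} [DecidableRel G.Adj] {x y : V} (h : G.Adj x y) :
    y ∈ nbhd G x :=
  mem_insert_of_mem ((G.mem_neighborFinset x y).2 h)

/-- `Catchable G k (x, y)`: with the cop at `x` and the robber at `y`, if the robber moves first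
in every round and the cop answers knowing his move, the cop can force co-location within `k`
rounds. -/
def Catchable (G : SimpleGraph V) [DecidableRel G.Adj] : ℕ → V × V → Prop
  | 0, p => p.1 = p.2
  | k + 1, p => p.1 = p.2 ∨ ∀ w ∈ nbhd G p.2, ∃ u ∈ nbhd G p.1, Catchable G k (u, w)

section Catchable

variable {G : SimpleGraph V} [DecidableRel G.Adj]

lemma catchable_self (k : ℕ) (x : V) : Catchable G k (x, x) := by
  cases k <;> simp [Catchable]

lemma Catchable.succ {k : ℕ} {p : V × V} (h : Catchable G k p) : Catchable G (k + 1) p := by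
  induction k generalizing p with
  | zero => exact Or.inl h
  | succ k ih =>
    rcases h with h | h
    · exact Or.inl h
    · exact Or.inr fun w hw => (h w hw).imp fun _ ⟨hu, hc⟩ => ⟨hu, ih hc⟩

lemma Catchable.mono {k m : ℕ} {p : V × V} (hkm : k ≤ m) (h : Catchable G k p) :
    Catchable G m p := by
  induction hkm with
  | refl => exact h
  | step _ ih => exact ih.succ

lemma exists_catchable_of_forall_nbhd {x y : V}
    (h : ∀ w ∈ nbhd G y, ∃ u ∈ nbhd G x, ∃ k, Catchable G k (u, w)) :
    ∃ k, Catchable G k (x, y) := by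
  classical
  choose! u hu k hk using h
  refine ⟨(nbhd G y).sup k + 1, Or.inr fun w hw => ⟨u w, hu w hw, ?_⟩⟩
  exact (hk w hw).mono (le_sup hw)

lemma exists_catchable_of_reachable {x z : V} (hr : G.Reachable x z)
    (hz : ∀ y, ∃ k, Catchable G k (z, y)) (y : V) : ∃ k, Catchable G k (x, y) := by
  obtain ⟨walk⟩ := hr
  induction walk generalizing y with
  | nil => exact hz y
  | cons hadj _ ih =>
    exact exists_catchable_of_forall_nbhd fun w _ => ⟨_, mem_nbhd_of_adj hadj, ih hz w⟩

lemma exists_forall_catchable_of_forall_exists (h : ∀ p : V × V, ∃ k, Catchable G k p) :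
    ∃ T, 0 < T ∧ ∀ p, Catchable G T p := by
  choose k hk using h
  exact ⟨univ.sup k + 1, Nat.succ_pos _,
    fun p => (hk p).mono ((le_sup (mem_univ p)).trans (Nat.le_succ _))⟩

def RobberSafe (G : SimpleGraph V) [DecidableRel G.Adj] (p : V × V) : Prop :=
  ∀ u ∈ nbhd G p.1, ¬ ∃ k, Catchable G k (u, p.2)

lemma exists_robberSafe_move {c y : V} (h : ¬ ∃ k, Catchable G k (c, y)) :
    ∃ w ∈ nbhd G y, RobberSafe G (c, w) := by
  contrapose! h
  exact exists_catchable_of_forall_nbhd fun w hw => by simpa [RobberSafe] using h w hw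

lemma RobberSafe.ne {p : V × V} (h : RobberSafe G p) : p.1 ≠ p.2 := fun he =>
  h p.1 (mem_nbhd_self G _) ⟨0, he⟩

end Catchable

/-! ### An evading robber in the turn-based game -/

section TurnBased

variable {G : SimpleGraph V} [DecidableRel G.Adj] {K : ℕ}

lemma tbPos_succ_fst_mem (sc : TBCop V K) (sr : TBRob V K) (t : ℕ) (i : Fin K) :
    (tbPos G sc sr (t + 1)).1 i ∈ nbhd G ((tbPos G sc sr t).1 i) := by
  simp only [tbPos, tbPlay, List.getLast?_concat, Option.getD_some]
  split_ifs with h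
  exacts [h, mem_nbhd_self G _]

lemma tbPos_succ_snd (sc : TBCop V K) (sr : TBRob V K) (t : ℕ) :
    (tbPos G sc sr (t + 1)).2 =
      if sr.2 (tbPlay G sc sr t) (tbPos G sc sr (t + 1)).1 ∈ nbhd G (tbPos G sc sr t).2 then
        sr.2 (tbPlay G sc sr t) (tbPos G sc sr (t + 1)).1
      else (tbPos G sc sr t).2 := by
  simp only [tbPos, tbPlay, List.getLast?_concat, Option.getD_some]

end TurnBased

section Evader

variable {G : SimpleGraph V} [DecidableRel G.Adj]

variable (G) in
open Classical in
noncomputable def escape (c y : V) : V :=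
  if h : ∃ w ∈ nbhd G y, RobberSafe G (c, w) then h.choose else y

lemma escape_spec {c y : V} (h : ¬ ∃ k, Catchable G k (c, y)) :
    escape G c y ∈ nbhd G y ∧ RobberSafe G (c, escape G c y) := by
  have hsafe := exists_robberSafe_move h
  rw [escape, dif_pos hsafe]
  exact hsafe.choose_spec

variable (G) in
/-- `x₀` enters only as the default position of an empty history, as in `tbPos`. -/
noncomputable def evader (x₀ : Fin 1 → V) (y₀ : V) : TBRob V 1 :=
  (fun _ => y₀, fun h c => escape G (c 0) (h.getLast?.getD (x₀, y₀)).2)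

lemma robberSafe_tbPos_evader (sc : TBCop V 1) {y₀ : V} (hy₀ : RobberSafe G (sc.1 0, y₀))
    (t : ℕ) :
    RobberSafe G ((tbPos G sc (evader G sc.1 y₀) t).1 0, (tbPos G sc (evader G sc.1 y₀) t).2) := by
  induction t with
  | zero => exact hy₀
  | succ t ih =>
    obtain ⟨hmem, hsafe⟩ := escape_spec (ih _ (tbPos_succ_fst_mem _ _ t 0))
    rw [tbPos_succ_snd]
    exact (if_pos hmem).symm ▸ hsafe

lemma not_tbCaptured_evader (sc : TBCop V 1) {y₀ : V} (hy₀ : RobberSafe G (sc.1 0, y₀)) :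
    ¬ tbCaptured G sc (evader G sc.1 y₀) := by
  rintro ⟨t, i, hcap⟩
  obtain rfl : i = 0 := Subsingleton.elim i 0
  have hsafe := robberSafe_tbPos_evader sc hy₀ t
  rcases hcap with hcap | hcap
  · exact hsafe.ne hcap
  · exact hsafe _ (tbPos_succ_fst_mem _ _ t 0) ⟨0, hcap⟩

lemma exists_forall_catchable_of_tbCopWin (h : tbCopWin G 1) :
    ∃ x₀, ∀ y, ∃ k, Catchable G k (x₀, y) := by
  obtain ⟨sc, hsc⟩ := h
  refine ⟨sc.1 0, fun y => ?_⟩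
  by_contra hy
  obtain ⟨y₀, -, hy₀⟩ := exists_robberSafe_move hy
  exact not_tbCaptured_evader sc hy₀ (hsc _)

lemma tbCopWin_of_copNumber_eq_succ {k : ℕ} (h : copNumber G = k + 1) : tbCopWin G (k + 1) :=
  h ▸ Nat.sInf_mem (Nat.nonempty_of_sInf_eq_succ h)

lemma exists_forall_catchable (hconn : G.Connected) (h : copNumber G = 1) :
    ∃ T, 0 < T ∧ ∀ p, Catchable G T p := by
  obtain ⟨x₀, hx₀⟩ := exists_forall_catchable_of_tbCopWin (tbCopWin_of_copNumber_eq_succ h)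
  exact exists_forall_catchable_of_forall_exists fun p =>
    exists_catchable_of_reachable (hconn.preconnected p.1 x₀) hx₀ p.2

end Evader

/-! ### Expectations of nonnegative functions under a `PMF` -/

namespace PMF

variable {α β : Type*}

noncomputable def expect (p : PMF α) (g : α → ℝ≥0∞) : ℝ≥0∞ :=
  ∑' a, p a * g a

lemma expect_pure (a : α) (g : α → ℝ≥0∞) : (pure a).expect g = g a := by
  rw [expect, tsum_eq_single a fun b hb => by simp [pure_apply, hb]]
  simp [pure_apply]

lemma expect_bind (p : PMF α) (f : α → PMF β) (g : β → ℝ≥0∞) :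
    (p.bind f).expect g = p.expect fun a => (f a).expect g := by
  simp only [expect, bind_apply, ← ENNReal.tsum_mul_right, ← ENNReal.tsum_mul_left, mul_assoc]
  exact ENNReal.tsum_comm

lemma expect_map (p : PMF α) (f : α → β) (g : β → ℝ≥0∞) :
    (p.map f).expect g = p.expect (g ∘ f) := by
  simp only [map, expect_bind, Function.comp_apply, expect_pure]
  rfl

lemma expect_mono (p : PMF α) {g g' : α → ℝ≥0∞} (h : ∀ a, g a ≤ g' a) :
    p.expect g ≤ p.expect g' :=
  ENNReal.tsum_le_tsum fun a => by gcongr; exact h a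

lemma expect_const (p : PMF α) (c : ℝ≥0∞) : p.expect (fun _ => c) = c := by
  rw [expect, ENNReal.tsum_mul_right, tsum_coe, one_mul]

lemma expect_le {p : PMF α} {g : α → ℝ≥0∞} {c : ℝ≥0∞} (h : ∀ a, g a ≤ c) : p.expect g ≤ c :=
  (p.expect_mono h).trans_eq (p.expect_const c)

lemma expect_mul_left (p : PMF α) (c : ℝ≥0∞) (g : α → ℝ≥0∞) :
    p.expect (fun a => c * g a) = c * p.expect g := by
  simp only [expect, ← ENNReal.tsum_mul_left, mul_left_comm]

lemma expect_add (p : PMF α) (g g' : α → ℝ≥0∞) :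
    p.expect (fun a => g a + g' a) = p.expect g + p.expect g' := by
  simp only [expect, mul_add, ENNReal.tsum_add]

lemma toOuterMeasure_eq_expect (p : PMF α) (s : Set α) :
    p.toOuterMeasure s = p.expect (s.indicator 1) := by
  rw [toOuterMeasure_apply, expect]
  refine tsum_congr fun a => ?_
  by_cases ha : a ∈ s <;> simp [ha]

lemma expect_le_one_sub {p : PMF α} {g : α → ℝ≥0∞} (hg : ∀ a, g a ≤ 1) (a₀ : α) :
    p.expect g ≤ 1 - p a₀ * (1 - g a₀) := by
  refine ENNReal.le_sub_of_add_le_right (ENNReal.mul_ne_top (p.apply_ne_top a₀)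
    (ENNReal.sub_ne_top ENNReal.one_ne_top)) ?_
  calc p.expect g + p a₀ * (1 - g a₀)
      ≤ p.expect g + p.expect (fun a => 1 - g a) := by
        gcongr
        exact ENNReal.le_tsum (f := fun a => p a * (1 - g a)) a₀
    _ = p.expect fun _ => 1 := by
        rw [← expect_add]
        exact congrArg p.expect (funext fun a => add_tsub_cancel_of_le (hg a))
    _ = 1 := p.expect_const 1

end PMF

/-! ### The guessing cop in the concurrent game -/

section GuessingCop

variable {G : SimpleGraph V} [DecidableRel G.Adj]

variable (G) in
open Classical in
/-- A neighbor of `x` minimizing the capture time of a robber who moved to `w`; minimality makes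
it a winning answer at every level `k` at once. -/
noncomputable def response (x w : V) : V :=
  if h : ∃ k, ∃ u ∈ nbhd G x, Catchable G k (u, w) then (Nat.find_spec h).choose else x

open Classical in
lemma response_mem (x w : V) : response G x w ∈ nbhd G x := by
  unfold response
  split_ifs with h
  exacts [(Nat.find_spec h).choose_spec.1, mem_nbhd_self G x]

open Classical in
lemma catchable_response {k : ℕ} {x w : V} (h : ∃ u ∈ nbhd G x, Catchable G k (u, w)) :
    Catchable G k (response G x w, w) := by
  have hex : ∃ k, ∃ u ∈ nbhd G x, Catchable G k (u, w) := ⟨k, h⟩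
  rw [response, dif_pos hex]
  exact (Nat.find_spec hex).choose_spec.2.mono (Nat.find_min' hex h)

/-- The right guess is the robber's actual move, clamped to `N[y]` as in `step1`. -/
lemma exists_guess_catchable {k : ℕ} {x y : V} (hxy : x ≠ y) (h : Catchable G (k + 1) (x, y))
    (w : V) : ∃ g ∈ nbhd G y, Catchable G k (step1 G (x, y) (response G x g) w) := by
  set g := if w ∈ nbhd G y then w else y with hg
  have hg_mem : g ∈ nbhd G y := by
    rw [hg]
    split_ifs with hw
    exacts [hw, mem_nbhd_self G y]
  have hcatch := catchable_response ((Or.resolve_left h hxy) g hg_mem)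
  refine ⟨g, hg_mem, ?_⟩
  simp only [step1, hxy, if_false, if_pos (response_mem x g), ← hg]
  split_ifs
  exacts [catchable_self k _, hcatch]

variable (G) in
noncomputable def guessDist (p : V × V) : PMF V :=
  (PMF.uniformOfFinset (nbhd G p.2) (nbhd_nonempty G p.2)).map (response G p.1)

variable (G) in
noncomputable def guessingCop (init : V × V) : Strat V :=
  fun h => guessDist G (h.getLast?.getD init)

variable (G) in
open Classical in
/-- An upper bound on the probability that the robber, at `p`, survives `k` more rounds against
the guessing cop, when each guess is right with probability at least `q`. -/
noncomputable def survivalBound (q : ℝ≥0∞) (k : ℕ) (p : V × V) : ℝ≥0∞ :=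
  if p.1 = p.2 then 0 else if Catchable G k p then 1 - q ^ k else 1

variable {q : ℝ≥0∞}

lemma survivalBound_le_one {k : ℕ} {p : V × V} : survivalBound G q k p ≤ 1 := by
  unfold survivalBound
  split_ifs <;> simp

lemma survivalBound_le_of_catchable {k : ℕ} {p : V × V} (h : Catchable G k p) :
    survivalBound G q k p ≤ 1 - q ^ k := by
  unfold survivalBound
  split_ifs <;> simp

lemma survivalBound_le_mul {T : ℕ} (hT : ∀ p, Catchable G T p) (p : V × V) :
    survivalBound G q T p ≤ (1 - q ^ T) * survivalBound G q 0 p := by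
  by_cases hp : p.1 = p.2
  · simp [survivalBound, hp]
  · simp [survivalBound, hp, hT p, Catchable]

lemma expect_survivalBound_step (hq : ∀ y, q ≤ ((nbhd G y).card : ℝ≥0∞)⁻¹) (ρ : PMF V)
    (k : ℕ) (p : V × V) :
    ρ.expect (fun w => (guessDist G p).expect fun u => survivalBound G q k (step1 G p u w)) ≤
      survivalBound G q (k + 1) p := by
  obtain ⟨x, y⟩ := p
  by_cases hxy : x = y
  · subst hxy
    simp [step1, survivalBound, PMF.expect_const]
  by_cases hc : Catchable G (k + 1) (x, y)
  swap
  · rw [show survivalBound G q (k + 1) (x, y) = 1 by simp [survivalBound, hxy, hc]]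
    exact PMF.expect_le fun _ => PMF.expect_le fun _ => survivalBound_le_one
  have hq1 : q ≤ 1 := (hq y).trans (ENNReal.inv_le_one.2 (by
    exact_mod_cast (nbhd_nonempty G y).card_pos))
  rw [show survivalBound G q (k + 1) (x, y) = 1 - q ^ (k + 1) by simp [survivalBound, hxy, hc]]
  refine PMF.expect_le fun w => ?_
  obtain ⟨g, hg, hcatch⟩ := exists_guess_catchable hxy hc w
  rw [guessDist, PMF.expect_map]
  refine (PMF.expect_le_one_sub (fun _ => survivalBound_le_one) g).trans ?_
  rw [PMF.uniformOfFinset_apply_of_mem _ hg]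
  calc _ ≤ 1 - q * q ^ k := by
        gcongr
        · exact hq y
        · calc q ^ k = 1 - (1 - q ^ k) :=
                (ENNReal.sub_sub_cancel ENNReal.one_ne_top (pow_le_one₀ zero_le hq1)).symm
            _ ≤ _ := tsub_le_tsub_left (survivalBound_le_of_catchable hcatch) 1
    _ = 1 - q ^ (k + 1) := by rw [pow_succ']

lemma expect_play1_succ (πC πR : Strat V) (init : V × V) (t : ℕ) (F : List (V × V) → ℝ≥0∞) :
    (play1 G πC πR init (t + 1)).expect F = (play1 G πC πR init t).expect fun h =>
      (πR h).expect fun w => (πC h).expect fun u =>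
        F (h ++ [step1 G (h.getLast?.getD init) u w]) := by
  rw [play1, PMF.expect_bind]
  congr 1
  funext h
  rw [PMF.bind_comm]
  simp only [PMF.expect_bind, PMF.expect_pure]

lemma expect_survivalBound_play1 (hq : ∀ y, q ≤ ((nbhd G y).card : ℝ≥0∞)⁻¹) (πR : Strat V)
    (init : V × V) (k t : ℕ) :
    (play1 G (guessingCop G init) πR init (t + k)).expect
        (fun h => survivalBound G q 0 (h.getLast?.getD init)) ≤
      (play1 G (guessingCop G init) πR init t).expect
        (fun h => survivalBound G q k (h.getLast?.getD init)) := by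
  induction k generalizing t with
  | zero => exact le_rfl
  | succ k ih =>
    rw [show t + (k + 1) = t + 1 + k by omega]
    refine (ih (t + 1)).trans ?_
    rw [expect_play1_succ]
    refine PMF.expect_mono _ fun h => ?_
    simp only [List.getLast?_concat, Option.getD_some]
    exact expect_survivalBound_step hq (πR h) k _

lemma freeProb1_eq_expect (πC πR : Strat V) (init : V × V) (q : ℝ≥0∞) (t : ℕ) :
    freeProb1 G πC πR init t =
      (play1 G πC πR init t).expect fun h => survivalBound G q 0 (h.getLast?.getD init) := by
  rw [freeProb1, PMF.toOuterMeasure_eq_expect]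
  congr 1
  funext h
  by_cases hh : (h.getLast?.getD init).1 = (h.getLast?.getD init).2 <;>
    simp [survivalBound, hh, Catchable]

lemma freeProb1_le_one (πC πR : Strat V) (init : V × V) (t : ℕ) :
    freeProb1 G πC πR init t ≤ 1 := by
  rw [freeProb1_eq_expect πC πR init 0]
  exact PMF.expect_le fun _ => survivalBound_le_one

lemma freeProb1_guessingCop_add_le (hq : ∀ y, q ≤ ((nbhd G y).card : ℝ≥0∞)⁻¹) {T : ℕ}
    (hT : ∀ p, Catchable G T p) (πR : Strat V) (init : V × V) (t : ℕ) :
    freeProb1 G (guessingCop G init) πR init (t + T) ≤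
      (1 - q ^ T) * freeProb1 G (guessingCop G init) πR init t := by
  rw [freeProb1_eq_expect _ _ _ q, freeProb1_eq_expect _ _ _ q, ← PMF.expect_mul_left]
  exact (expect_survivalBound_play1 hq πR init T t).trans
    (PMF.expect_mono _ fun h => survivalBound_le_mul hT _)

end GuessingCop

/-! ### Geometric tails -/

namespace ENNReal

lemma le_pow_div_of_le_mul_shift {f : ℕ → ℝ≥0∞} {a : ℝ≥0∞} {T : ℕ} (hT : 0 < T)
    (hf1 : ∀ t, f t ≤ 1) (hf : ∀ t, f (t + T) ≤ a * f t) (t : ℕ) : f t ≤ a ^ (t / T) := by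
  induction t using Nat.strong_induction_on with
  | _ t ih =>
    rcases lt_or_ge t T with ht | ht
    · simpa [Nat.div_eq_of_lt ht] using hf1 t
    · obtain ⟨s, rfl⟩ := Nat.exists_eq_add_of_le' ht
      rw [Nat.add_div_right s hT, pow_succ']
      exact (hf s).trans (by gcongr; exact ih s (by omega))

lemma tsum_pow_div (a : ℝ≥0∞) {T : ℕ} (hT : 0 < T) : ∑' t, a ^ (t / T) = T * ∑' k, a ^ k := by
  have : NeZero T := ⟨hT.ne'⟩
  rw [← (Nat.divModEquiv T).symm.tsum_eq, ENNReal.tsum_prod', ← ENNReal.tsum_mul_left]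
  refine tsum_congr fun k => ?_
  have hdiv (r : Fin T) : (k * T + r) / T = k := by
    rw [Nat.add_comm, Nat.add_mul_div_right _ _ hT, Nat.div_eq_of_lt r.isLt, zero_add]
  simp [Nat.divModEquiv, hdiv]

lemma tsum_le_of_le_mul_shift {f : ℕ → ℝ≥0∞} {a : ℝ≥0∞} {T : ℕ} (hT : 0 < T)
    (hf1 : ∀ t, f t ≤ 1) (hf : ∀ t, f (t + T) ≤ a * f t) : ∑' t, f t ≤ T * (1 - a)⁻¹ :=
  calc ∑' t, f t ≤ ∑' t, a ^ (t / T) :=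
        ENNReal.tsum_le_tsum (le_pow_div_of_le_mul_shift hT hf1 hf)
    _ = T * (1 - a)⁻¹ := by rw [tsum_pow_div a hT, ENNReal.tsum_geometric]

end ENNReal

/-- if the cop number of `G` is `1`, then the value of the single-cop
concurrent game is finite from every initial position. -/
theorem gameValue_lt_top_of_copNumber_eq_one (G : SimpleGraph V) [DecidableRel G.Adj]
    (hconn : G.Connected) (h : copNumber G = 1) :
    ∀ init : V × V,
      (⨅ πC : Strat V, ⨆ πR : Strat V, payoff G πC πR init) < ⊤ := by
  intro init
  obtain ⟨T, hT, hcatch⟩ := exists_forall_catchable hconn h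
  set q : ℝ≥0∞ := (Fintype.card V : ℝ≥0∞)⁻¹
  have hq : ∀ y, q ≤ ((nbhd G y).card : ℝ≥0∞)⁻¹ := fun y =>
    ENNReal.inv_le_inv.2 (by exact_mod_cast card_le_univ _)
  have hdecay : 0 < 1 - (1 - q ^ T) := tsub_pos_of_lt <| ENNReal.sub_lt_self ENNReal.one_ne_top
    one_ne_zero (pow_ne_zero T (ENNReal.inv_ne_zero.2 (ENNReal.natCast_ne_top _)))
  calc ⨅ πC, ⨆ πR, payoff G πC πR init ≤ ⨆ πR, payoff G (guessingCop G init) πR init :=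
        iInf_le _ _
    _ ≤ T * (1 - (1 - q ^ T))⁻¹ := iSup_le fun πR =>
        ENNReal.tsum_le_of_le_mul_shift hT (freeProb1_le_one _ πR init)
          (freeProb1_guessingCop_add_le hq hcatch πR init)
    _ < ⊤ := ENNReal.mul_lt_top (ENNReal.natCast_lt_top T) (ENNReal.inv_lt_top.2 hdecay)
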